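/- arXiv:2004.01122 — 3 statements merged into one kernel-verified Lean document; each statement's English description precedes it below -/
import Mathlib

section
/- Soundness of the Rot-Couple code-transformation rule (single-gadget case of Theorem 6.1): for every n ≥ 1, every Hermitian involutory n×n complex matrix σ (σᴴ = σ and σ·σ = 1ₙ), every n×n complex matrices O and ρ, and every θ ∈ ℝ, the ancilla-observable expectation of the gadget equals the derivative of the observable semantics of the rotation gate: trace((Z_A ⊗ O) · R′_σ(θ) · (e00 ⊗ ρ) · (R′_σ(θ))ᴴ) = deriv (fun t : ℝ => trace(O · R_σ(t) · ρ · (R_σ(t))ᴴ)) θ, where the derivative is of the ℂ-valued function of the real variable t. -/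
open Matrix Kronecker Complex

/-- The parameterized rotation gate `R_σ(θ) = cos(θ/2) • 1 − (i·sin(θ/2)) • σ`. -/
noncomputable def Rgate {n : ℕ} (σ : Matrix (Fin n) (Fin n) ℂ) (θ : ℝ) :
    Matrix (Fin n) (Fin n) ℂ :=
  (Real.cos (θ / 2) : ℂ) • (1 : Matrix (Fin n) (Fin n) ℂ)
    - (Complex.I * (Real.sin (θ / 2) : ℂ)) • σ

/-- `|0⟩⟨0|`. -/
def e00 : Matrix (Fin 2) (Fin 2) ℂ := !![1, 0; 0, 0]

/-- `|1⟩⟨1|`. -/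
def e11 : Matrix (Fin 2) (Fin 2) ℂ := !![0, 0; 0, 1]

/-- The Hadamard matrix. -/
noncomputable def Hmat : Matrix (Fin 2) (Fin 2) ℂ :=
  ((1 / Real.sqrt 2 : ℝ) : ℂ) • !![1, 1; 1, -1]

/-- The Pauli-Z ancilla observable. -/
def ZA : Matrix (Fin 2) (Fin 2) ℂ := !![1, 0; 0, -1]

/-- The controlled rotation `C_Rσ(θ) = |0⟩⟨0| ⊗ R_σ(θ) + |1⟩⟨1| ⊗ R_σ(θ+π)`. -/
noncomputable def CR {n : ℕ} (σ : Matrix (Fin n) (Fin n) ℂ) (θ : ℝ) :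
    Matrix (Fin 2 × Fin n) (Fin 2 × Fin n) ℂ :=
  e00 ⊗ₖ Rgate σ θ + e11 ⊗ₖ Rgate σ (θ + Real.pi)

/-- The differentiation gadget `R′_σ(θ) = (H ⊗ 1) C_Rσ(θ) (H ⊗ 1)`. -/
noncomputable def Rgadget {n : ℕ} (σ : Matrix (Fin n) (Fin n) ℂ) (θ : ℝ) :
    Matrix (Fin 2 × Fin n) (Fin 2 × Fin n) ℂ :=
  (Hmat ⊗ₖ (1 : Matrix (Fin n) (Fin n) ℂ)) * CR σ θ
    * (Hmat ⊗ₖ (1 : Matrix (Fin n) (Fin n) ℂ))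


/-!
Conjugating by `H ⊗ 1` turns the controlled rotation into the block form
`½ (!![1,1;1,1] ⊗ R_σ(θ) + !![1,-1;-1,1] ⊗ R_σ(θ+π))`. With the ancilla in `|0⟩` and `Z_A`
measured, the diagonal blocks cancel and only the cross terms survive, leaving
`½ (tr(O R_σ(θ) ρ R_σ(θ+π)ᴴ) + tr(O R_σ(θ+π) ρ R_σ(θ)ᴴ))`. Since `R_σ'(θ) = ½ R_σ(θ+π)`
(the parameter shift), this is the product-rule derivative of `tr(O R_σ(t) ρ R_σ(t)ᴴ)`.
-/

noncomputable def ctrlGadget {n : Type*} [Fintype n] [DecidableEq n] (A B : Matrix n n ℂ) :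
    Matrix (Fin 2 × n) (Fin 2 × n) ℂ :=
  (Hmat ⊗ₖ (1 : Matrix n n ℂ)) * (e00 ⊗ₖ A + e11 ⊗ₖ B) * (Hmat ⊗ₖ (1 : Matrix n n ℂ))

lemma Rgadget_eq_ctrlGadget {n : ℕ} (σ : Matrix (Fin n) (Fin n) ℂ) (θ : ℝ) :
    Rgadget σ θ = ctrlGadget (Rgate σ θ) (Rgate σ (θ + Real.pi)) :=
  rfl

lemma ofReal_inv_sqrt_two_mul_self :
    ((1 / Real.sqrt 2 : ℝ) : ℂ) * ((1 / Real.sqrt 2 : ℝ) : ℂ) = 1 / 2 := by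
  rw [← Complex.ofReal_mul, div_mul_div_comm, Real.mul_self_sqrt zero_le_two]
  norm_num

lemma Hmat_mul_e00_mul_Hmat : Hmat * e00 * Hmat = (1 / 2 : ℂ) • !![1, 1; 1, 1] := by
  rw [Hmat, Matrix.smul_mul, Matrix.smul_mul, Matrix.mul_smul, smul_smul,
    ofReal_inv_sqrt_two_mul_self]
  norm_num [e00, Matrix.mul_fin_two]

lemma Hmat_mul_e11_mul_Hmat : Hmat * e11 * Hmat = (1 / 2 : ℂ) • !![1, -1; -1, 1] := by
  rw [Hmat, Matrix.smul_mul, Matrix.smul_mul, Matrix.mul_smul, smul_smul,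
    ofReal_inv_sqrt_two_mul_self]
  norm_num [e11, Matrix.mul_fin_two]

section ctrlGadget

variable {n : Type*} [Fintype n] [DecidableEq n]

lemma ctrlGadget_eq (A B : Matrix n n ℂ) :
    ctrlGadget A B = (1 / 2 : ℂ) • (!![1, 1; 1, 1] ⊗ₖ A + !![1, -1; -1, 1] ⊗ₖ B) := by
  rw [ctrlGadget, Matrix.mul_add, Matrix.add_mul, ← mul_kronecker_mul, ← mul_kronecker_mul,
    ← mul_kronecker_mul, ← mul_kronecker_mul, Matrix.one_mul, Matrix.one_mul, Matrix.mul_one,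
    Matrix.mul_one, Hmat_mul_e00_mul_Hmat, Hmat_mul_e11_mul_Hmat, smul_kronecker, smul_kronecker,
    smul_add]

theorem trace_ZA_kron_mul_ctrlGadget (O ρ A B : Matrix n n ℂ) :
    ((ZA ⊗ₖ O) * ctrlGadget A B * (e00 ⊗ₖ ρ) * (ctrlGadget A B)ᴴ).trace
      = ((O * A * ρ * Bᴴ).trace + (O * B * ρ * Aᴴ).trace) / 2 := by
  have hP : (!![1, 1; 1, 1] : Matrix (Fin 2) (Fin 2) ℂ)ᴴ = !![1, 1; 1, 1] := by
    ext i j; fin_cases i <;> fin_cases j <;> simp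
  have hQ : (!![1, -1; -1, 1] : Matrix (Fin 2) (Fin 2) ℂ)ᴴ = !![1, -1; -1, 1] := by
    ext i j; fin_cases i <;> fin_cases j <;> simp
  rw [ctrlGadget_eq, conjTranspose_smul, conjTranspose_add, conjTranspose_kronecker,
    conjTranspose_kronecker, hP, hQ]
  simp only [Matrix.mul_add, Matrix.add_mul, Matrix.smul_mul, Matrix.mul_smul,
    ← mul_kronecker_mul, trace_add, trace_smul, trace_kronecker, smul_eq_mul]
  norm_num [ZA, e00, Matrix.mul_fin_two, Matrix.trace_fin_two_of]
  ring

end ctrlGadget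

lemma Rgate_add_pi {n : ℕ} (σ : Matrix (Fin n) (Fin n) ℂ) (θ : ℝ) :
    Rgate σ (θ + Real.pi) =
      (-Real.sin (θ / 2) : ℂ) • (1 : Matrix (Fin n) (Fin n) ℂ)
        - (Complex.I * (Real.cos (θ / 2) : ℂ)) • σ := by
  rw [Rgate, add_div, Real.cos_add_pi_div_two, Real.sin_add_pi_div_two, Complex.ofReal_neg]

section derivatives

-- Any norm would do: `HasDerivAt` only sees the (product) topology.
attribute [local instance] Matrix.normedAddCommGroup Matrix.normedSpace

theorem hasDerivAt_Rgate {n : ℕ} (σ : Matrix (Fin n) (Fin n) ℂ) (θ : ℝ) :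
    HasDerivAt (Rgate σ) ((1 / 2 : ℂ) • Rgate σ (θ + Real.pi)) θ := by
  have hcos := ((hasDerivAt_id' θ).div_const 2).cos.ofReal_comp
  have hsin := ((hasDerivAt_id' θ).div_const 2).sin.ofReal_comp
  refine ((hcos.smul_const 1).sub ((hsin.const_mul Complex.I).smul_const σ)).congr_deriv ?_
  rw [Rgate_add_pi]
  push_cast
  module

theorem hasDerivAt_trace_mul_mul_conjTranspose {n : Type*} [Fintype n] (O ρ : Matrix n n ℂ)
    {A : ℝ → Matrix n n ℂ} {A' : Matrix n n ℂ} {θ : ℝ} (hA : HasDerivAt A A' θ) :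
    HasDerivAt (fun t => (O * A t * ρ * (A t)ᴴ).trace)
      ((O * A' * ρ * (A θ)ᴴ).trace + (O * A θ * ρ * A'ᴴ).trace) θ := by
  let B : Matrix n n ℂ →ₗ[ℝ] Matrix n n ℂ →ₗ[ℝ] ℂ :=
    LinearMap.mk₂ ℝ (fun A C => (O * A * ρ * C).trace)
      (by intros; simp [Matrix.mul_add, Matrix.add_mul])
      (by intros; simp)
      (by intros; simp [Matrix.mul_add])
      (by intros; simp)
  exact (B.toContinuousBilinearMap.hasDerivAt_of_bilinear (fun _ => hA) fun _ => hA.star).congr_deriv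
    (add_comm _ _)

end derivatives

theorem rot_couple_sound_general (n : ℕ)
    (σ O ρ : Matrix (Fin n) (Fin n) ℂ)
    (θ : ℝ) :
    ((ZA ⊗ₖ O) * Rgadget σ θ * (e00 ⊗ₖ ρ) * (Rgadget σ θ)ᴴ).trace
      = deriv (fun t : ℝ => ((O * Rgate σ t * ρ * (Rgate σ t)ᴴ).trace)) θ := by
  rw [(hasDerivAt_trace_mul_mul_conjTranspose O ρ (hasDerivAt_Rgate σ θ)).deriv,
    Rgadget_eq_ctrlGadget, trace_ZA_kron_mul_ctrlGadget]
  simp only [one_div, Algebra.mul_smul_comm, Algebra.smul_mul_assoc, trace_smul, smul_eq_mul,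
    conjTranspose_smul, star_inv₀, star_ofNat]
  ring

/-- Soundness of the Rot-Couple code-transformation rule (single-gadget case):
the ancilla-observable expectation of the gadget equals the derivative of the
observable semantics of the rotation gate. -/
theorem rot_couple_sound (n : ℕ) (hn : 1 ≤ n)
    (σ O ρ : Matrix (Fin n) (Fin n) ℂ)
    (hσH : σᴴ = σ) (hσ2 : σ * σ = 1) (θ : ℝ) :
    ((ZA ⊗ₖ O) * Rgadget σ θ * (e00 ⊗ₖ ρ) * (Rgadget σ θ)ᴴ).trace
      = deriv (fun t : ℝ => ((O * Rgate σ t * ρ * (Rgate σ t)ᴴ).trace)) θ :=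
  rot_couple_sound_general n σ O ρ θ
end

section
/- Gadget trace identity (key computation in the soundness proof of the Rot-Couple rule): for every n×n complex matrices σ, O, ρ and every θ ∈ ℝ, trace((Z_A ⊗ O) · R′_σ(θ) · (e00 ⊗ ρ) · (R′_σ(θ))ᴴ) = (1/2) · trace(O · (R_σ(θ) · ρ · (R_σ(θ+π))ᴴ + R_σ(θ+π) · ρ · (R_σ(θ))ᴴ)). -/
open Matrix Kronecker Complex

noncomputable def Pm : Matrix (Fin 2) (Fin 2) ℂ := (1/2 : ℂ) • !![1,1;1,1]
noncomputable def Qm : Matrix (Fin 2) (Fin 2) ℂ := (1/2 : ℂ) • !![1,-1;-1,1]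

lemma hs : ((Real.sqrt 2 : ℝ) : ℂ) * ((Real.sqrt 2 : ℝ) : ℂ) = 2 := by
  rw [← Complex.ofReal_mul, Real.mul_self_sqrt (by norm_num)]; norm_num

lemma HeH0 : Hmat * e00 * Hmat = Pm := by
  ext i j
  fin_cases i <;> fin_cases j <;>
    simp [Hmat, e00, Pm, Matrix.mul_apply, Fin.sum_univ_two, Matrix.smul_apply] <;>
    field_simp <;> ring_nf <;>
    rw [show ((Real.sqrt 2 : ℝ) : ℂ)^2 = 2 by rw [sq, hs]]

lemma HeH1 : Hmat * e11 * Hmat = Qm := by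
  ext i j
  fin_cases i <;> fin_cases j <;>
    simp [Hmat, e11, Qm, Matrix.mul_apply, Fin.sum_univ_two, Matrix.smul_apply] <;>
    field_simp <;> ring_nf <;>
    rw [show ((Real.sqrt 2 : ℝ) : ℂ)^2 = 2 by rw [sq, hs]]

lemma kron_conjT {m n : Type*} [Fintype m] [Fintype n] [DecidableEq m] [DecidableEq n]
    (A : Matrix m m ℂ) (B : Matrix n n ℂ) : (A ⊗ₖ B)ᴴ = Aᴴ ⊗ₖ Bᴴ := by
  ext i j
  simp [Matrix.conjTranspose_apply, Matrix.kroneckerMap_apply, mul_comm]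

lemma PmH : Pmᴴ = Pm := by
  ext i j; fin_cases i <;> fin_cases j <;> simp [Pm, Matrix.conjTranspose_apply]

lemma QmH : Qmᴴ = Qm := by
  ext i j; fin_cases i <;> fin_cases j <;> simp [Qm, Matrix.conjTranspose_apply]

lemma tPP : (ZA * Pm * e00 * Pm).trace = 0 := by
  simp [ZA, Pm, e00, Matrix.trace_fin_two, Matrix.mul_apply, Fin.sum_univ_two]

lemma tPQ : (ZA * Pm * e00 * Qm).trace = 1/2 := by
  simp [ZA, Pm, Qm, e00, Matrix.trace_fin_two, Matrix.mul_apply, Fin.sum_univ_two]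
  norm_num

lemma tQP : (ZA * Qm * e00 * Pm).trace = 1/2 := by
  simp [ZA, Pm, Qm, e00, Matrix.trace_fin_two, Matrix.mul_apply, Fin.sum_univ_two]
  norm_num

lemma tQQ : (ZA * Qm * e00 * Qm).trace = 0 := by
  simp [ZA, Qm, e00, Matrix.trace_fin_two, Matrix.mul_apply, Fin.sum_univ_two]

lemma gadget_eq {n : ℕ} (σ : Matrix (Fin n) (Fin n) ℂ) (θ : ℝ) :
    Rgadget σ θ = Pm ⊗ₖ Rgate σ θ + Qm ⊗ₖ Rgate σ (θ + Real.pi) := by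
  unfold Rgadget CR
  rw [Matrix.mul_add, Matrix.add_mul]
  simp only [← Matrix.mul_kronecker_mul, Matrix.one_mul, Matrix.mul_one]
  rw [HeH0, HeH1]

/-- Gadget trace identity: key computation in the soundness proof of the Rot-Couple rule. -/
theorem gadget_trace_identity (n : ℕ) (σ O ρ : Matrix (Fin n) (Fin n) ℂ) (θ : ℝ) :
    ((ZA ⊗ₖ O) * Rgadget σ θ * (e00 ⊗ₖ ρ) * (Rgadget σ θ)ᴴ).trace
      = (1 / 2 : ℂ) * (O * (Rgate σ θ * ρ * (Rgate σ (θ + Real.pi))ᴴ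
          + Rgate σ (θ + Real.pi) * ρ * (Rgate σ θ)ᴴ)).trace := by
  set A := Rgate σ θ
  set B := Rgate σ (θ + Real.pi)
  rw [gadget_eq]
  rw [Matrix.conjTranspose_add, kron_conjT, kron_conjT, PmH, QmH]
  simp only [Matrix.mul_add, Matrix.add_mul, ← Matrix.mul_kronecker_mul, Matrix.trace_add,
    Matrix.trace_kronecker]
  rw [tPP, tPQ, tQP, tQQ]
  simp only [Matrix.mul_add, Matrix.trace_add, Matrix.mul_assoc]
  ring
end

section
/- Block decomposition of the gadget output state: for every n×n complex matrices σ and ρ and every θ ∈ ℝ, writing V₀ := R_σ(θ) + R_σ(θ+π) and V₁ := R_σ(θ) − R_σ(θ+π), one has R′_σ(θ) · (e00 ⊗ ρ) · (R′_σ(θ))ᴴ = (1/4) · Σ_{b,b' ∈ {0,1}} E_{b b'} ⊗ (V_b · ρ · V_{b'}ᴴ), where E_{b b'} is the 2×2 matrix unit with 1 in entry (b,b') and 0 elsewhere. -/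
open Matrix Kronecker Complex

/-! Since `e00 = |0⟩⟨0|` is a projector, the output state only sees `R′_σ(θ) (e00 ⊗ 1)`.
A direct 2×2 computation shows `H e00 H e00 = ½(|0⟩⟨0| + |1⟩⟨0|)` and
`H e11 H e00 = ½(|0⟩⟨0| − |1⟩⟨0|)`, so this is the block column `½ Σ_b |b⟩⟨0| ⊗ V_b`; conjugating
`|0⟩⟨0| ⊗ ρ` by a block column `Σ_b |b⟩⟨0| ⊗ K_b` gives `Σ_{b,b'} |b⟩⟨b'| ⊗ K_b ρ K_{b'}ᴴ`. -/
lemma e00_eq_single : e00 = single 0 0 1 := by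
  ext i j; fin_cases i <;> fin_cases j <;> rfl

lemma ofReal_sqrt_two_inv_mul_self : ((√2 : ℝ) : ℂ)⁻¹ * ((√2 : ℝ) : ℂ)⁻¹ = 2⁻¹ := by
  rw [← mul_inv, ← ofReal_mul, Real.mul_self_sqrt zero_le_two, ofReal_ofNat]

lemma Hmat_mul_e00_mul_Hmat_mul_e00 :
    Hmat * e00 * Hmat * e00 = (1 / 2 : ℂ) • (single 0 0 1 + single 1 0 1) := by
  ext i j; fin_cases i <;> fin_cases j <;>
    simp [Hmat, e00, mul_apply, ofReal_sqrt_two_inv_mul_self]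

lemma Hmat_mul_e11_mul_Hmat_mul_e00 :
    Hmat * e11 * Hmat * e00 = (1 / 2 : ℂ) • (single 0 0 1 - single 1 0 1) := by
  ext i j; fin_cases i <;> fin_cases j <;>
    simp [Hmat, e00, e11, mul_apply, ofReal_sqrt_two_inv_mul_self]

lemma Matrix.kronecker_sub {l m p q α : Type*} [NonUnitalNonAssocRing α] (A : Matrix l m α)
    (B₁ B₂ : Matrix p q α) : A ⊗ₖ (B₁ - B₂) = A ⊗ₖ B₁ - A ⊗ₖ B₂ := by
  ext ⟨i, k⟩ ⟨j, l⟩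
  simp [mul_sub]

lemma Matrix.sub_kronecker {l m p q α : Type*} [NonUnitalNonAssocRing α] (A₁ A₂ : Matrix l m α)
    (B : Matrix p q α) : (A₁ - A₂) ⊗ₖ B = A₁ ⊗ₖ B - A₂ ⊗ₖ B := by
  ext ⟨i, k⟩ ⟨j, l⟩
  simp [sub_mul]

lemma hadamard_conj_controlled_mul_e00_kronecker_one {n : Type*} [Fintype n] [DecidableEq n]
    (A B : Matrix n n ℂ) :
    (Hmat ⊗ₖ 1) * (e00 ⊗ₖ A + e11 ⊗ₖ B) * (Hmat ⊗ₖ 1) * (e00 ⊗ₖ 1)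
      = (1 / 2 : ℂ) • (single 0 0 1 ⊗ₖ (A + B) + single 1 0 1 ⊗ₖ (A - B)) := by
  simp only [mul_add, add_mul, ← mul_kronecker_mul, Matrix.mul_one, Matrix.one_mul,
    Hmat_mul_e00_mul_Hmat_mul_e00, Hmat_mul_e11_mul_Hmat_mul_e00, smul_kronecker, add_kronecker,
    sub_kronecker, kronecker_add, kronecker_sub, smul_add, smul_sub]
  abel

lemma sum_single_kronecker_mul_mul_conjTranspose {ι m n R : Type*} [Fintype ι] [DecidableEq ι]
    [Fintype m] [Fintype n] [CommSemiring R] [StarRing R] (i₀ : ι) (K : ι → Matrix m n R)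
    (ρ : Matrix n n R) :
    (∑ b, single b i₀ 1 ⊗ₖ K b) * (single i₀ i₀ 1 ⊗ₖ ρ) * (∑ b, single b i₀ 1 ⊗ₖ K b)ᴴ
      = ∑ b, ∑ b', single b b' 1 ⊗ₖ (K b * ρ * (K b')ᴴ) := by
  simp only [conjTranspose_sum, conjTranspose_kronecker, conjTranspose_single, star_one,
    Matrix.sum_mul, Matrix.mul_sum, ← mul_kronecker_mul, single_mul_single_same, mul_one]
  exact Finset.sum_comm

lemma mul_single_kronecker_mul_conjTranspose {ι m R : Type*} [Fintype ι] [DecidableEq ι]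
    [Fintype m] [DecidableEq m] [CommSemiring R] [StarRing R] (M : Matrix (ι × m) (ι × m) R)
    (i₀ : ι) (K : ι → Matrix m m R) (hM : M * (single i₀ i₀ 1 ⊗ₖ 1) = ∑ b, single b i₀ 1 ⊗ₖ K b)
    (ρ : Matrix m m R) :
    M * (single i₀ i₀ 1 ⊗ₖ ρ) * Mᴴ = ∑ b, ∑ b', single b b' 1 ⊗ₖ (K b * ρ * (K b')ᴴ) := by
  have hρ : single i₀ i₀ 1 ⊗ₖ ρ
      = (single i₀ i₀ 1 ⊗ₖ 1) * (single i₀ i₀ 1 ⊗ₖ ρ) * (single i₀ i₀ (1 : R) ⊗ₖ 1)ᴴ := by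
    simp only [conjTranspose_kronecker, conjTranspose_single, conjTranspose_one, star_one,
      ← mul_kronecker_mul, single_mul_single_same, mul_one, Matrix.one_mul]
  rw [hρ, ← sum_single_kronecker_mul_mul_conjTranspose, ← hM, conjTranspose_mul]
  simp only [Matrix.mul_assoc]

/-- Block decomposition of the gadget output state. -/
theorem gadget_block_decomposition (n : ℕ) (σ ρ : Matrix (Fin n) (Fin n) ℂ) (θ : ℝ)
    (V : Fin 2 → Matrix (Fin n) (Fin n) ℂ)
    (hV0 : V 0 = Rgate σ θ + Rgate σ (θ + Real.pi))
    (hV1 : V 1 = Rgate σ θ - Rgate σ (θ + Real.pi)) :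
    Rgadget σ θ * (e00 ⊗ₖ ρ) * (Rgadget σ θ)ᴴ
      = (1 / 4 : ℂ) • ∑ b : Fin 2, ∑ b' : Fin 2,
          (Matrix.single b b' (1 : ℂ)) ⊗ₖ (V b * ρ * (V b')ᴴ) := by
  have hcol : Rgadget σ θ * (single 0 0 1 ⊗ₖ 1) = ∑ b, single b 0 1 ⊗ₖ ((1 / 2 : ℂ) • V b) := by
    rw [← e00_eq_single, Rgadget, CR, hadamard_conj_controlled_mul_e00_kronecker_one,
      Fin.sum_univ_two, hV0, hV1, kronecker_smul, kronecker_smul, smul_add]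
  rw [e00_eq_single, mul_single_kronecker_mul_conjTranspose _ 0 _ hcol]
  simp only [Finset.smul_sum, conjTranspose_smul, smul_mul_assoc, mul_smul_comm, smul_smul,
    kronecker_smul]
  norm_num
end
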